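/- In the classical realisation on ℝ⁶, the three Poisson brackets {C_{12}, C_{23}}, {C_{23}, C_{13}}, and {C_{13}, C_{12}} are all equal; their common value divided by 2 defines the generator F. -/

import Mathlib

open Finset

/-- Canonical Poisson bracket on the phase space ℝ²ⁿ. -/
noncomputable def pb (n : ℕ) (f g : (Fin n → ℝ) → (Fin n → ℝ) → ℝ)
    (x p : Fin n → ℝ) : ℝ :=
  ∑ j, (deriv (fun t => f (Function.update x j t) p) (x j) *
        deriv (fun t => g x (Function.update p j t)) (p j) -
        deriv (fun t => f x (Function.update p j t)) (p j) *
        deriv (fun t => g (Function.update x j t) p) (x j))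

/-- The two-index Racah generator `C_{ij}` in the classical realisation. -/
noncomputable def Cij (n : ℕ) (a : Fin n → ℝ) (i j : Fin n)
    (x p : Fin n → ℝ) : ℝ :=
  -(1 / 4) * ((x i * p j - x j * p i) ^ 2 + a i * (x j) ^ 2 / (x i) ^ 2 +
    a j * (x i) ^ 2 / (x j) ^ 2 + a i + a j)


/-! The gradient of `C_ij` only involves the coordinates `x_i, x_j, p_i, p_j`, so in `{C_ij, C_jk}`
(for distinct `i, j, k`) only the pair `(x_j, p_j)` contributes, and a direct computation gives
`{C_ij, C_jk} = (L_ij L_jk L_ki - a_i x_j x_k L_jk / x_i² - a_j x_k x_i L_ki / x_j²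
- a_k x_i x_j L_ij / x_k²) / 4`. This expression is invariant under cyclic permutations of
`(i, j, k)`, and `C_ij = C_ji`, so the three brackets are its values at `(0,1,2)`, `(1,2,0)` and
`(2,0,1)`. -/

def angMom {n : ℕ} (x p : Fin n → ℝ) (i j : Fin n) : ℝ :=
  x i * p j - x j * p i

-- The generator `F = {C_ij, C_jk} / 2`, written with `L_ij = angMom x p i j`.
noncomputable def racahF {n : ℕ} (a : Fin n → ℝ) (i j k : Fin n) (x p : Fin n → ℝ) : ℝ :=
  (1 / 8) * (angMom x p i j * angMom x p j k * angMom x p k i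
    - a i * x j * x k * angMom x p j k / x i ^ 2
    - a j * x k * x i * angMom x p k i / x j ^ 2
    - a k * x i * x j * angMom x p i j / x k ^ 2)

theorem racahF_cyclic {n : ℕ} (a : Fin n → ℝ) (i j k : Fin n) (x p : Fin n → ℝ) :
    racahF a i j k x p = racahF a j k i x p := by
  unfold racahF; ring

theorem pb_eq_sum_of_hasDerivAt {n : ℕ} {f g : (Fin n → ℝ) → (Fin n → ℝ) → ℝ}
    {x p fx fp gx gp : Fin n → ℝ}
    (hfx : ∀ m, HasDerivAt (fun t => f (Function.update x m t) p) (fx m) (x m))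
    (hfp : ∀ m, HasDerivAt (fun t => f x (Function.update p m t)) (fp m) (p m))
    (hgx : ∀ m, HasDerivAt (fun t => g (Function.update x m t) p) (gx m) (x m))
    (hgp : ∀ m, HasDerivAt (fun t => g x (Function.update p m t)) (gp m) (p m)) :
    pb n f g x p = ∑ m, (fx m * gp m - fp m * gx m) := by
  simp only [pb, fun m => (hfx m).deriv, fun m => (hfp m).deriv, fun m => (hgx m).deriv,
    fun m => (hgp m).deriv]

theorem hasDerivAt_update_apply {n : ℕ} (x : Fin n → ℝ) (m i : Fin n) :
    HasDerivAt (fun t => Function.update x m t i) ((Pi.single m 1 : Fin n → ℝ) i) (x m) :=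
  hasDerivAt_pi.1 (hasDerivAt_update x m (x m)) i

namespace Cij

variable {n : ℕ} (a : Fin n → ℝ) (i j : Fin n) (x p : Fin n → ℝ)

theorem comm : Cij n a i j = Cij n a j i := by
  funext y q; unfold Cij; ring

noncomputable def gradX (m : Fin n) : ℝ :=
  -(1 / 2) * (angMom x p i j *
      ((Pi.single m 1 : Fin n → ℝ) i * p j - (Pi.single m 1 : Fin n → ℝ) j * p i)
    + (Pi.single m 1 : Fin n → ℝ) j * (a i * x j / x i ^ 2 - a j * x i ^ 2 / x j ^ 3)
    + (Pi.single m 1 : Fin n → ℝ) i * (a j * x i / x j ^ 2 - a i * x j ^ 2 / x i ^ 3))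

noncomputable def gradP (m : Fin n) : ℝ :=
  -(1 / 2) * angMom x p i j *
    ((Pi.single m 1 : Fin n → ℝ) j * x i - (Pi.single m 1 : Fin n → ℝ) i * x j)

variable {a i j x p}

theorem hasDerivAt_gradX (hi : x i ≠ 0) (hj : x j ≠ 0) (m : Fin n) :
    HasDerivAt (fun t => Cij n a i j (Function.update x m t) p) (gradX a i j x p m) (x m) := by
  have hxi := hasDerivAt_update_apply x m i
  have hxj := hasDerivAt_update_apply x m j
  have hL := ((hxi.mul_const (p j)).sub (hxj.mul_const (p i))).pow 2
  have hA := ((hxj.pow 2).const_mul (a i)).div (hxi.pow 2) (by simpa using hi)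
  have hB := ((hxi.pow 2).const_mul (a j)).div (hxj.pow 2) (by simpa using hj)
  refine ((((hL.add hA).add hB).add_const (a i)).add_const (a j)).const_mul (-(1 / 4))
    |>.congr_deriv ?_
  simp only [Pi.pow_apply, Pi.sub_apply, Function.update_eq_self, gradX, angMom]
  field_simp
  ring

theorem hasDerivAt_gradP (m : Fin n) :
    HasDerivAt (fun t => Cij n a i j x (Function.update p m t)) (gradP i j x p m) (p m) := by
  have hpi := hasDerivAt_update_apply p m i
  have hpj := hasDerivAt_update_apply p m j
  have hL := ((hpj.const_mul (x i)).sub (hpi.const_mul (x j))).pow 2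
  refine ((((hL.add_const (a i * x j ^ 2 / x i ^ 2)).add_const (a j * x i ^ 2 / x j ^ 2)).add_const
    (a i)).add_const (a j)).const_mul (-(1 / 4)) |>.congr_deriv ?_
  simp only [Pi.sub_apply, Function.update_eq_self, gradP, angMom]
  ring

theorem gradX_eq_zero {m : Fin n} (hmi : m ≠ i) (hmj : m ≠ j) : gradX a i j x p m = 0 := by
  simp [gradX, Pi.single_eq_of_ne hmi.symm, Pi.single_eq_of_ne hmj.symm]

theorem gradP_eq_zero {m : Fin n} (hmi : m ≠ i) (hmj : m ≠ j) : gradP i j x p m = 0 := by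
  simp [gradP, Pi.single_eq_of_ne hmi.symm, Pi.single_eq_of_ne hmj.symm]

end Cij

theorem pb_Cij_Cij_eq_two_mul_racahF {n : ℕ} {a x p : Fin n → ℝ} {i j k : Fin n}
    (hij : i ≠ j) (hjk : j ≠ k) (hki : k ≠ i) (hi : x i ≠ 0) (hj : x j ≠ 0) (hk : x k ≠ 0) :
    pb n (Cij n a i j) (Cij n a j k) x p = 2 * racahF a i j k x p := by
  rw [pb_eq_sum_of_hasDerivAt (Cij.hasDerivAt_gradX hi hj) Cij.hasDerivAt_gradP
    (Cij.hasDerivAt_gradX hj hk) Cij.hasDerivAt_gradP, Finset.sum_eq_single_of_mem j (mem_univ j)]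
  · simp only [Cij.gradX, Cij.gradP, angMom, racahF, Pi.single_eq_same, Pi.single_eq_of_ne hij,
      Pi.single_eq_of_ne hjk.symm]
    field_simp
    ring
  · intro m _ hmj
    by_cases hmi : m = i
    · subst hmi
      rw [Cij.gradX_eq_zero hmj hki.symm, Cij.gradP_eq_zero hmj hki.symm, mul_zero, mul_zero,
        sub_zero]
    · rw [Cij.gradX_eq_zero hmi hmj, Cij.gradP_eq_zero hmi hmj, zero_mul, zero_mul, sub_zero]

theorem stmt10 (a : Fin 3 → ℝ) (x p : Fin 3 → ℝ) (hx : ∀ i, x i ≠ 0) :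
    pb 3 (Cij 3 a 0 1) (Cij 3 a 1 2) x p = pb 3 (Cij 3 a 1 2) (Cij 3 a 0 2) x p ∧
    pb 3 (Cij 3 a 1 2) (Cij 3 a 0 2) x p = pb 3 (Cij 3 a 0 2) (Cij 3 a 0 1) x p := by
  have h01 := pb_Cij_Cij_eq_two_mul_racahF (a := a) (p := p) (by decide) (by decide) (by decide)
    (hx 0) (hx 1) (hx 2)
  have h12 := pb_Cij_Cij_eq_two_mul_racahF (a := a) (p := p) (by decide) (by decide) (by decide)
    (hx 1) (hx 2) (hx 0)
  have h20 := pb_Cij_Cij_eq_two_mul_racahF (a := a) (p := p) (by decide) (by decide) (by decide)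
    (hx 2) (hx 0) (hx 1)
  rw [Cij.comm a 0 2, h01, h12, h20, racahF_cyclic a 0 1 2, racahF_cyclic a 1 2 0]
  exact ⟨rfl, rfl⟩
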